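/- Let γ_1, ..., γ_n ∈ M_k ⊗ M_k be states, each of whose range is not contained in the antisymmetric subspace of C^k ⊗ C^k. Then γ_1^Γ ⊗ ... ⊗ γ_n^Γ ≥ 0 if and only if γ_i^Γ ≥ 0 for every i. -/

import Mathlib

/-!
Each `γ_i` is a nonzero positive semidefinite matrix, so it has a positive diagonal entry, and
`γ_i^Γ` has the same diagonal. If `γ_1^Γ ⊗ ⋯ ⊗ γ_n^Γ ≥ 0`, evaluating it on the product vector with
an arbitrary `z` in slot `j` and the standard basis vectors at those diagonal entries in the other
slots gives `⟨z, γ_j^Γ z⟩` times a positive number, so `γ_j^Γ ≥ 0`. Conversely, the tensor product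
of the square roots of the `γ_i^Γ` is a square root of their tensor product.
-/

open Matrix ComplexOrder

def flipOp (k : ℕ) : Matrix (Fin k × Fin k) (Fin k × Fin k) ℂ :=
  Matrix.of fun x y => if x.1 = y.2 ∧ x.2 = y.1 then 1 else 0

def partialTranspose {k : ℕ} (γ : Matrix (Fin k × Fin k) (Fin k × Fin k) ℂ) :
    Matrix (Fin k × Fin k) (Fin k × Fin k) ℂ :=
  Matrix.of fun x y => γ (x.1, y.2) (y.1, x.2)

/-- The tensor product `γ_1 ⊗ ⋯ ⊗ γ_n` of matrices on `C^k ⊗ C^k`. -/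
def bigTensor {n k : ℕ} (γ : Fin n → Matrix (Fin k × Fin k) (Fin k × Fin k) ℂ) :
    Matrix (Fin n → Fin k × Fin k) (Fin n → Fin k × Fin k) ℂ :=
  Matrix.of fun x y => ∏ i, γ i (x i) (y i)

/-- The antisymmetric subspace of `C^k ⊗ C^k`: vectors `v` with `F_k v = -v`. -/
noncomputable def antisymSubspace (k : ℕ) : Submodule ℂ (Fin k × Fin k → ℂ) :=
  LinearMap.ker (flipOp k + 1).mulVecLin

lemma Matrix.PosSemidef.exists_diag_pos {m 𝕜 : Type*} [Fintype m] [RCLike 𝕜] {A : Matrix m m 𝕜}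
    (hA : A.PosSemidef) (h0 : A ≠ 0) : ∃ i, 0 < A i i := by
  obtain ⟨i, -, hi⟩ := Finset.exists_ne_zero_of_sum_ne_zero (mt hA.trace_eq_zero_iff.mp h0)
  exact ⟨i, hA.diag_nonneg.lt_of_ne' hi⟩

section TensorVec

variable {ι m R : Type*} [Fintype ι] [CommSemiring R]

def tensorVec (v : ι → m → R) : (ι → m) → R := fun p => ∏ i, v i (p i)

lemma dotProduct_tensorVec [DecidableEq ι] [Fintype m] (u v : ι → m → R) :
    tensorVec u ⬝ᵥ tensorVec v = ∏ i, u i ⬝ᵥ v i := by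
  simp only [dotProduct, tensorVec, Fintype.prod_sum, Finset.prod_mul_distrib]

lemma star_tensorVec [StarRing R] (v : ι → m → R) :
    star (tensorVec v) = tensorVec (star v) := by
  ext p
  simp [tensorVec, star_prod]

end TensorVec

section BigTensor

variable {n k : ℕ}

lemma bigTensor_mul (A B : Fin n → Matrix (Fin k × Fin k) (Fin k × Fin k) ℂ) :
    bigTensor (fun i => A i * B i) = bigTensor A * bigTensor B := by
  ext x y
  simp only [bigTensor, mul_apply, of_apply, Fintype.prod_sum, Finset.prod_mul_distrib]

lemma bigTensor_conjTranspose (A : Fin n → Matrix (Fin k × Fin k) (Fin k × Fin k) ℂ) :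
    (bigTensor A)ᴴ = bigTensor (fun i => (A i)ᴴ) := by
  ext x y
  simp [bigTensor, conjTranspose_apply, star_prod]

lemma bigTensor_mulVec_tensorVec (A : Fin n → Matrix (Fin k × Fin k) (Fin k × Fin k) ℂ)
    (v : Fin n → Fin k × Fin k → ℂ) :
    bigTensor A *ᵥ tensorVec v = tensorVec (fun i => A i *ᵥ v i) := by
  ext p
  simp only [mulVec, dotProduct, bigTensor, tensorVec, of_apply, Fintype.prod_sum,
    Finset.prod_mul_distrib]

lemma dotProduct_bigTensor_mulVec_tensorVec
    (A : Fin n → Matrix (Fin k × Fin k) (Fin k × Fin k) ℂ) (v : Fin n → Fin k × Fin k → ℂ) :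
    star (tensorVec v) ⬝ᵥ bigTensor A *ᵥ tensorVec v = ∏ i, star (v i) ⬝ᵥ A i *ᵥ v i := by
  rw [bigTensor_mulVec_tensorVec, star_tensorVec, dotProduct_tensorVec]
  rfl

open scoped MatrixOrder in
lemma posSemidef_bigTensor {A : Fin n → Matrix (Fin k × Fin k) (Fin k × Fin k) ℂ}
    (hA : ∀ i, (A i).PosSemidef) : (bigTensor A).PosSemidef := by
  set S := fun i => CFC.sqrt (A i)
  have hS : A = fun i => (S i)ᴴ * S i := funext fun i => by
    rw [(CFC.sqrt_nonneg (A i)).posSemidef.1.eq, CFC.sqrt_mul_sqrt_self _ (hA i).nonneg]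
  rw [hS, bigTensor_mul, ← bigTensor_conjTranspose]
  exact posSemidef_conjTranspose_mul_self _

lemma Matrix.PosSemidef.of_bigTensor {A : Fin n → Matrix (Fin k × Fin k) (Fin k × Fin k) ℂ}
    (hA : (bigTensor A).PosSemidef) {j : Fin n} (hj : (A j).IsHermitian)
    (hdiag : ∀ i ≠ j, ∃ x, 0 < A i x x) : (A j).PosSemidef := by
  refine .of_dotProduct_mulVec_nonneg hj fun z => ?_
  choose x hx using hdiag
  let v : Fin n → Fin k × Fin k → ℂ := fun i =>
    if h : i = j then z else Pi.single (x i h) 1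
  have hq := hA.dotProduct_mulVec_nonneg (tensorVec v)
  rw [dotProduct_bigTensor_mulVec_tensorVec, ← Finset.mul_prod_erase _ _ (Finset.mem_univ j)]
    at hq
  have hrest : 0 < ∏ i ∈ Finset.univ.erase j, star (v i) ⬝ᵥ A i *ᵥ v i := by
    refine Finset.prod_pos fun i hi => ?_
    have hij := Finset.ne_of_mem_erase hi
    simpa [v, hij] using hx i hij
  have hz : star z ⬝ᵥ A j *ᵥ z = star (v j) ⬝ᵥ A j *ᵥ v j := by simp [v]
  rw [hz]
  simpa [hrest.ne'] using mul_nonneg hq (inv_nonneg.mpr hrest.le)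

end BigTensor

lemma partialTranspose_isHermitian {k : ℕ} {γ : Matrix (Fin k × Fin k) (Fin k × Fin k) ℂ}
    (h : γ.IsHermitian) : (partialTranspose γ).IsHermitian := by
  ext x y
  exact congrFun (congrFun h (x.1, y.2)) (y.1, x.2)

lemma partialTranspose_apply_self {k : ℕ} (γ : Matrix (Fin k × Fin k) (Fin k × Fin k) ℂ)
    (x : Fin k × Fin k) : partialTranspose γ x x = γ x x :=
  rfl

/-- For states `γ_1,...,γ_n` whose ranges are not contained in the
antisymmetric subspace, `γ_1^Γ ⊗ ⋯ ⊗ γ_n^Γ ≥ 0` iff `γ_i^Γ ≥ 0` for every `i`. -/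
theorem stmt18 (n k : ℕ) (γ : Fin n → Matrix (Fin k × Fin k) (Fin k × Fin k) ℂ)
    (hγ : ∀ i, (γ i).PosSemidef)
    (hrange : ∀ i, ¬ (LinearMap.range (γ i).mulVecLin ≤ antisymSubspace k)) :
    (bigTensor (fun i => partialTranspose (γ i))).PosSemidef ↔
      ∀ i, (partialTranspose (γ i)).PosSemidef := by
  have hne : ∀ i, γ i ≠ 0 := fun i h0 => hrange i (by simp [h0])
  refine ⟨fun H j => H.of_bigTensor (partialTranspose_isHermitian (hγ j).1) fun i _ => ?_,
    posSemidef_bigTensor⟩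
  simpa only [partialTranspose_apply_self] using (hγ i).exists_diag_pos (hne i)
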